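/- For every p ≥ 1, all ζ, α, η, β ∈ Z₂^p with η·α + ζ·β = 0 in ZMod 2, and every real θ, conjugation by the s-rotation leaves the spinor invariant: (R^ζ_α(θ))^† · ((−i)^{ν(η,β)} S^η_β) · R^ζ_α(θ) = (−i)^{ν(η,β)} S^η_β, where ^† denotes conjugate transpose. -/

import Mathlib

open Matrix

/-- `Z₂^p`, the binary strings of length `p`. -/
abbrev Z2 (p : ℕ) : Type := Fin p → ZMod 2

/-- Inner product of two binary strings, valued in `ZMod 2`. -/
def dotp {p : ℕ} (ζ γ : Z2 p) : ZMod 2 := ∑ i, ζ i * γ i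

/-- `(-1)^x` for `x : ZMod 2`, as a complex number. -/
noncomputable def sgn (x : ZMod 2) : ℂ := if x = 0 then 1 else -1

/-- The spinor `S^ζ_α`: the `2^p × 2^p` complex matrix with `(γ, β)` entry
`(-1)^{ζ·γ}` if `γ = β + α` and `0` otherwise. -/
noncomputable def Spinor {p : ℕ} (ζ α : Z2 p) : Matrix (Z2 p) (Z2 p) ℂ :=
  Matrix.of fun γ β => if γ = β + α then sgn (dotp ζ γ) else 0

/-- `ν(ζ,α)`: the number of indices `i` with `ζ i = 1` and `α i = 1`. -/
def nu {p : ℕ} (ζ α : Z2 p) : ℕ :=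
  (Finset.univ.filter fun i => ζ i = 1 ∧ α i = 1).card

/-- The s-rotation `R^ζ_α(θ) = exp(iθ (-i)^{ν(ζ,α)} S^ζ_α)`. -/
noncomputable def sRot {p : ℕ} (ζ α : Z2 p) (θ : ℝ) : Matrix (Z2 p) (Z2 p) ℂ :=
  NormedSpace.exp ((Complex.I * θ * (-Complex.I) ^ nu ζ α) • Spinor ζ α)

/-!
The generator `A = iθ (-i)^{ν(ζ,α)} S^ζ_α` of the s-rotation is skew-Hermitian,
because `(-i)^{ν(ζ,α)} S^ζ_α` is Hermitian: `(S^ζ_α)^† = (-1)^{ζ·α} S^ζ_α` and `ν(ζ,α) ≡ ζ·α`.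
Moreover `S^ζ_α S^η_β = (-1)^{η·α} S^{ζ+η}_{α+β}`, so the two spinors commute exactly when
`η·α = ζ·β`. Hence `R^† = exp(-A) = R⁻¹` and `R` commutes with `S^η_β`.
-/

theorem Matrix.conjTranspose_exp_mul_mul_exp_of_commute {m 𝔸 : Type*} [Fintype m]
    [DecidableEq m] [NormedRing 𝔸] [NormedAlgebra ℚ 𝔸] [CompleteSpace 𝔸] [StarRing 𝔸]
    [ContinuousStar 𝔸] {A B : Matrix m m 𝔸} (hA : Aᴴ = -A) (hAB : Commute A B) :
    (NormedSpace.exp A)ᴴ * B * NormedSpace.exp A = B := by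
  rw [← exp_conjTranspose, hA, mul_assoc, hAB.symm.exp_right.eq, ← mul_assoc,
    ← exp_add_of_commute _ _ (Commute.refl A).neg_left, neg_add_cancel, NormedSpace.exp_zero,
    one_mul]

lemma ZMod.two_cases (x : ZMod 2) : x = 0 ∨ x = 1 := by
  revert x; decide

lemma sgn_add (x y : ZMod 2) : sgn (x + y) = sgn x * sgn y := by
  rcases ZMod.two_cases x with rfl | rfl <;> rcases ZMod.two_cases y with rfl | rfl <;>
    simp [sgn, CharTwo.add_self_eq_zero]

lemma sgn_mul_self (x : ZMod 2) : sgn x * sgn x = 1 := by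
  rw [← sgn_add, CharTwo.add_self_eq_zero]
  simp [sgn]

lemma star_sgn (x : ZMod 2) : star (sgn x) = sgn x := by
  rcases ZMod.two_cases x with rfl | rfl <;> simp [sgn]

lemma sgn_natCast (n : ℕ) : sgn (n : ZMod 2) = (-1) ^ n := by
  induction n with
  | zero => simp [sgn]
  | succ k ih => rw [Nat.cast_succ, sgn_add, ih, pow_succ]; simp [sgn]

lemma dotp_add_left {p : ℕ} (ζ η γ : Z2 p) : dotp (ζ + η) γ = dotp ζ γ + dotp η γ := by
  simp [dotp, add_mul, Finset.sum_add_distrib]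

lemma dotp_add_right {p : ℕ} (ζ γ δ : Z2 p) : dotp ζ (γ + δ) = dotp ζ γ + dotp ζ δ := by
  simp [dotp, mul_add, Finset.sum_add_distrib]

lemma Z2.add_add_cancel_right {p : ℕ} (a b : Z2 p) : a + b + b = a := by
  funext i
  show a i + b i + b i = a i
  rw [add_assoc, CharTwo.add_self_eq_zero, add_zero]

lemma natCast_nu {p : ℕ} (ζ α : Z2 p) : (nu ζ α : ZMod 2) = dotp ζ α := by
  rw [nu, dotp, Finset.card_filter, Nat.cast_sum]
  refine Finset.sum_congr rfl fun i _ => ?_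
  rcases ZMod.two_cases (ζ i) with h1 | h1 <;> rcases ZMod.two_cases (α i) with h2 | h2 <;>
    simp [h1, h2]

lemma spinor_mul {p : ℕ} (ζ α η β : Z2 p) :
    Spinor ζ α * Spinor η β = sgn (dotp η α) • Spinor (ζ + η) (α + β) := by
  ext γ δ
  simp only [mul_apply, Spinor, of_apply, Matrix.smul_apply, smul_eq_mul]
  rw [Finset.sum_eq_single (δ + β) (fun b _ hb => by rw [if_neg hb, mul_zero]) (by simp),
    if_pos rfl, ← add_comm β α, ← add_assoc]
  by_cases hγ : γ = δ + β + α
  · rw [if_pos hγ, if_pos hγ, hγ, dotp_add_left, sgn_add, dotp_add_right η (δ + β), sgn_add]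
    linear_combination
      -sgn (dotp ζ (δ + β + α)) * sgn (dotp η (δ + β)) * sgn_mul_self (dotp η α)
  · rw [if_neg hγ, if_neg hγ, zero_mul, mul_zero]

lemma commute_spinor {p : ℕ} {ζ α η β : Z2 p} (h : dotp η α + dotp ζ β = 0) :
    Commute (Spinor ζ α) (Spinor η β) := by
  rw [Commute, SemiconjBy, spinor_mul, spinor_mul, add_comm η, add_comm β,
    CharTwo.add_eq_zero.mp h]

lemma spinor_conjTranspose {p : ℕ} (ζ α : Z2 p) :
    (Spinor ζ α)ᴴ = sgn (dotp ζ α) • Spinor ζ α := by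
  ext γ δ
  simp only [conjTranspose_apply, Spinor, of_apply, Matrix.smul_apply, smul_eq_mul]
  by_cases hγ : γ = δ + α
  · rw [if_pos (by rw [hγ, Z2.add_add_cancel_right]), if_pos hγ, star_sgn, hγ,
      dotp_add_right, sgn_add]
    linear_combination -sgn (dotp ζ δ) * sgn_mul_self (dotp ζ α)
  · rw [if_neg (by rintro rfl; exact hγ (Z2.add_add_cancel_right γ α).symm), if_neg hγ,
      star_zero, mul_zero]

lemma isHermitian_phase_smul_spinor {p : ℕ} (ζ α : Z2 p) :
    ((-Complex.I) ^ nu ζ α • Spinor ζ α).IsHermitian := by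
  rw [IsHermitian, conjTranspose_smul, spinor_conjTranspose, smul_smul, ← natCast_nu, sgn_natCast,
    star_pow, star_neg, Complex.star_def, Complex.conj_I, ← mul_pow, neg_mul_neg, mul_one]

theorem sRot_conj_invariant_general {p : ℕ} (ζ α η β : Z2 p)
    (h : dotp η α + dotp ζ β = 0) (θ : ℝ) :
    (sRot ζ α θ)ᴴ * ((-Complex.I) ^ nu η β • Spinor η β) * sRot ζ α θ =
      (-Complex.I) ^ nu η β • Spinor η β := by
  set H := (-Complex.I) ^ nu ζ α • Spinor ζ α
  have hA : (Complex.I * θ * (-Complex.I) ^ nu ζ α) • Spinor ζ α = (Complex.I * θ) • H :=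
    (smul_smul ..).symm
  have hskew : ((Complex.I * θ) • H)ᴴ = -((Complex.I * θ) • H) := by
    rw [conjTranspose_smul, (isHermitian_phase_smul_spinor ζ α).eq, star_mul', Complex.star_def,
      Complex.conj_I, Complex.conj_ofReal, neg_mul, neg_smul]
  have hcomm : Commute ((Complex.I * θ) • H) ((-Complex.I) ^ nu η β • Spinor η β) :=
    (((commute_spinor h).smul_left _).smul_right _).smul_left _
  rw [sRot, hA]
  exact conjTranspose_exp_mul_mul_exp_of_commute hskew hcomm

/-- If `η·α + ζ·β = 0`, conjugation by the s-rotation leaves the phased spinor invariant. -/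
theorem sRot_conj_invariant {p : ℕ} (hp : 1 ≤ p) (ζ α η β : Z2 p)
    (h : dotp η α + dotp ζ β = 0) (θ : ℝ) :
    (sRot ζ α θ)ᴴ * ((-Complex.I) ^ nu η β • Spinor η β) * sRot ζ α θ =
      (-Complex.I) ^ nu η β • Spinor η β :=
  sRot_conj_invariant_general ζ α η β h θ
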